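/- arXiv:1501.05196 — 3 statements merged into one kernel-verified Lean document; each statement's English description precedes it below -/
import Mathlib

section
/- Let F : [a,b] → L(X,Y) be of bounded semivariation and G : [a,b] → L(X) be of bounded variation. Define FG : [a,b] → L(X,Y) by (FG)(t) = F(t) ∘ G(t) for t ∈ [a,b]. Then FG is of bounded semivariation on [a,b] and SV_a^b(FG) ≤ ‖F‖_∞ · var_a^b(G) + ‖G‖_∞ · SV_a^b(F), where ‖F‖_∞ = sup_{t∈[a,b]} ‖F(t)‖ and ‖G‖_∞ = sup_{t∈[a,b]} ‖G(t)‖. -/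
open Filter Topology

/-- A division `a = α 0 < α 1 < … < α n = b` of the interval `[a,b]`. -/
def IsDivision (a b : ℝ) (n : ℕ) (α : ℕ → ℝ) : Prop :=
  α 0 = a ∧ α n = b ∧ ∀ i < n, α i < α (i + 1)

/-- The semivariation `SV_a^b(F)` of `F : [a,b] → L(X,Y)`. -/
noncomputable def semivar {X Y : Type*} [NormedAddCommGroup X] [NormedSpace ℝ X]
    [NormedAddCommGroup Y] [NormedSpace ℝ Y]
    (a b : ℝ) (F : ℝ → X →L[ℝ] Y) : ENNReal :=
  ⨆ (n : ℕ) (α : ℕ → ℝ) (_ : IsDivision a b n α)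
    (x : ℕ → X) (_ : ∀ j, ‖x j‖ ≤ 1),
    ENNReal.ofReal ‖∑ j ∈ Finset.range n, (F (α (j + 1)) - F (α j)) (x j)‖

/-- The (Jordan) variation `var_a^b(G)` of a function with values in a normed space. -/
noncomputable def evar {E : Type*} [NormedAddCommGroup E] (a b : ℝ) (G : ℝ → E) : ENNReal :=
  ⨆ (n : ℕ) (α : ℕ → ℝ) (_ : IsDivision a b n α),
    ENNReal.ofReal (∑ j ∈ Finset.range n, ‖G (α (j + 1)) - G (α j)‖)

/-- The supremum norm `‖f‖_∞ = sup_{t ∈ [a,b]} ‖f t‖` (computed in `[0,∞]`). -/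
noncomputable def supNorm {E : Type*} [NormedAddCommGroup E] (a b : ℝ) (f : ℝ → E) : ENNReal :=
  ⨆ t ∈ Set.Icc a b, ENNReal.ofReal ‖f t‖

-- helper: division points lie in [a,b]
lemma IsDivision.mono' {a b : ℝ} {n : ℕ} {α : ℕ → ℝ} (h : IsDivision a b n α) :
    ∀ d j, j + d ≤ n → α j ≤ α (j + d) := by
  intro d
  induction d with
  | zero => intro j _; simp
  | succ d ih =>
    intro j hj
    have h1 : α j ≤ α (j + d) := ih j (by omega)
    have h2 : α (j + d) < α (j + d + 1) := h.2.2 _ (by omega)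
    calc α j ≤ α (j + d) := h1
      _ ≤ α (j + d + 1) := h2.le

lemma IsDivision.mem_Icc {a b : ℝ} {n : ℕ} {α : ℕ → ℝ} (h : IsDivision a b n α)
    {i : ℕ} (hi : i ≤ n) : α i ∈ Set.Icc a b := by
  constructor
  · have := h.mono' i 0 (by omega); rw [Nat.zero_add, h.1] at this; exact this
  · have := h.mono' (n - i) i (by omega)
    rwa [Nat.add_sub_cancel' hi, h.2.1] at this

lemma ofReal_le_supNorm {E : Type*} [NormedAddCommGroup E] {a b : ℝ} (f : ℝ → E)
    {t : ℝ} (ht : t ∈ Set.Icc a b) : ENNReal.ofReal ‖f t‖ ≤ supNorm a b f :=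
  le_biSup (fun t => ENNReal.ofReal ‖f t‖) ht

lemma div_le_semivar {X Y : Type*} [NormedAddCommGroup X] [NormedSpace ℝ X]
    [NormedAddCommGroup Y] [NormedSpace ℝ Y] {a b : ℝ} (F : ℝ → X →L[ℝ] Y)
    {n : ℕ} {α : ℕ → ℝ} (hα : IsDivision a b n α) {x : ℕ → X} (hx : ∀ j, ‖x j‖ ≤ 1) :
    ENNReal.ofReal ‖∑ j ∈ Finset.range n, (F (α (j + 1)) - F (α j)) (x j)‖ ≤ semivar a b F :=
  le_iSup_of_le n (le_iSup_of_le α (le_iSup_of_le hα (le_iSup_of_le x (le_iSup_of_le hx le_rfl))))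

lemma div_le_evar {E : Type*} [NormedAddCommGroup E] {a b : ℝ} (G : ℝ → E)
    {n : ℕ} {α : ℕ → ℝ} (hα : IsDivision a b n α) :
    ENNReal.ofReal (∑ j ∈ Finset.range n, ‖G (α (j + 1)) - G (α j)‖) ≤ evar a b G :=
  le_iSup_of_le n (le_iSup_of_le α (le_iSup_of_le hα le_rfl))

-- if ofReal ‖T x‖ ≤ s for all unit-ball x, then ofReal ‖T‖ ≤ s
lemma ofReal_opNorm_le {X Y : Type*} [NormedAddCommGroup X] [NormedSpace ℝ X]
    [NormedAddCommGroup Y] [NormedSpace ℝ Y] (T : X →L[ℝ] Y) {s : ENNReal}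
    (h : ∀ x : X, ‖x‖ ≤ 1 → ENNReal.ofReal ‖T x‖ ≤ s) :
    ENNReal.ofReal ‖T‖ ≤ s := by
  rcases eq_or_ne s ⊤ with rfl | hs
  · exact le_top
  rw [ENNReal.ofReal_le_iff_le_toReal hs]
  refine T.opNorm_le_bound ENNReal.toReal_nonneg fun x => ?_
  rcases eq_or_ne x 0 with rfl | hx
  · simp
  have hxn : (0:ℝ) < ‖x‖ := norm_pos_iff.mpr hx
  have hu : ‖(‖x‖⁻¹ • x)‖ ≤ 1 := by
    rw [norm_smul, norm_inv, norm_norm, inv_mul_cancel₀ hxn.ne']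
  have := (ENNReal.ofReal_le_iff_le_toReal hs).mp (h _ hu)
  rw [map_smul, norm_smul, norm_inv, norm_norm] at this
  calc ‖T x‖ = ‖x‖ * (‖x‖⁻¹ * ‖T x‖) := by field_simp
    _ ≤ ‖x‖ * s.toReal := by
        refine mul_le_mul_of_nonneg_left ?_ hxn.le
        simpa using this
    _ = s.toReal * ‖x‖ := mul_comm _ _

lemma sub_le_semivar {X Y : Type*} [NormedAddCommGroup X] [NormedSpace ℝ X]
    [NormedAddCommGroup Y] [NormedSpace ℝ Y] {a b : ℝ} (hab : a < b) (F : ℝ → X →L[ℝ] Y)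
    {t : ℝ} (ht : t ∈ Set.Icc a b) :
    ENNReal.ofReal ‖F t - F a‖ ≤ semivar a b F := by
  refine ofReal_opNorm_le _ fun x hx => ?_
  rcases eq_or_lt_of_le ht.1 with rfl | hat
  · simp
  rcases eq_or_lt_of_le ht.2 with rfl | htb
  · -- t = b : division {a, b}
    have hα : IsDivision a t 1 (fun i => if i = 0 then a else t) := by
      refine ⟨rfl, rfl, ?_⟩
      intro i hi
      interval_cases i
      simpa using hat
    have hx' : ∀ j, ‖(fun i => if i = 0 then x else 0) j‖ ≤ 1 := by
      intro j; by_cases h : j = 0 <;> simp [h, hx]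
    have := div_le_semivar F hα hx'
    simpa using this
  · -- a < t < b : division {a, t, b}
    have hα : IsDivision a b 2 (fun i => if i = 0 then a else if i = 1 then t else b) := by
      refine ⟨rfl, rfl, ?_⟩
      intro i hi
      interval_cases i <;> simp [hat, htb]
    have hx' : ∀ j, ‖(fun i => if i = 0 then x else 0) j‖ ≤ 1 := by
      intro j; by_cases h : j = 0 <;> simp [h, hx]
    have := div_le_semivar F hα hx'
    simpa [Finset.sum_range_succ] using this

lemma sub_le_evar {E : Type*} [NormedAddCommGroup E] {a b : ℝ} (hab : a < b) (G : ℝ → E)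
    {t : ℝ} (ht : t ∈ Set.Icc a b) :
    ENNReal.ofReal ‖G t - G a‖ ≤ evar a b G := by
  rcases eq_or_lt_of_le ht.1 with rfl | hat
  · simp
  rcases eq_or_lt_of_le ht.2 with rfl | htb
  · have hα : IsDivision a t 1 (fun i => if i = 0 then a else t) := by
      refine ⟨rfl, rfl, ?_⟩
      intro i hi
      interval_cases i
      simpa using hat
    have := div_le_evar G hα
    simpa using this
  · have hα : IsDivision a b 2 (fun i => if i = 0 then a else if i = 1 then t else b) := by
      refine ⟨rfl, rfl, ?_⟩
      intro i hi
      interval_cases i <;> simp [hat, htb]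
    refine le_trans ?_ (div_le_evar G hα)
    rw [ENNReal.ofReal_le_ofReal_iff]
    · simp [Finset.sum_range_succ]
    · positivity

lemma supNorm_le_of_semivar {X Y : Type*} [NormedAddCommGroup X] [NormedSpace ℝ X]
    [NormedAddCommGroup Y] [NormedSpace ℝ Y] {a b : ℝ} (hab : a < b) (F : ℝ → X →L[ℝ] Y) :
    supNorm a b F ≤ ENNReal.ofReal ‖F a‖ + semivar a b F := by
  refine iSup₂_le fun t ht => ?_
  have h1 : ‖F t‖ ≤ ‖F a‖ + ‖F t - F a‖ := by
    have := norm_add_le (F a) (F t - F a); simpa using this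
  calc ENNReal.ofReal ‖F t‖ ≤ ENNReal.ofReal (‖F a‖ + ‖F t - F a‖) :=
        ENNReal.ofReal_le_ofReal h1
    _ = ENNReal.ofReal ‖F a‖ + ENNReal.ofReal ‖F t - F a‖ :=
        ENNReal.ofReal_add (norm_nonneg _) (norm_nonneg _)
    _ ≤ ENNReal.ofReal ‖F a‖ + semivar a b F :=
        add_le_add_right (sub_le_semivar hab F ht) _

lemma supNorm_le_of_evar {E : Type*} [NormedAddCommGroup E] {a b : ℝ} (hab : a < b) (G : ℝ → E) :
    supNorm a b G ≤ ENNReal.ofReal ‖G a‖ + evar a b G := by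
  refine iSup₂_le fun t ht => ?_
  have h1 : ‖G t‖ ≤ ‖G a‖ + ‖G t - G a‖ := by
    have := norm_add_le (G a) (G t - G a); simpa using this
  calc ENNReal.ofReal ‖G t‖ ≤ ENNReal.ofReal (‖G a‖ + ‖G t - G a‖) :=
        ENNReal.ofReal_le_ofReal h1
    _ = ENNReal.ofReal ‖G a‖ + ENNReal.ofReal ‖G t - G a‖ :=
        ENNReal.ofReal_add (norm_nonneg _) (norm_nonneg _)
    _ ≤ ENNReal.ofReal ‖G a‖ + evar a b G :=
        add_le_add_right (sub_le_evar hab G ht) _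

lemma semivar_comp_le {X Y : Type*} [NormedAddCommGroup X] [NormedSpace ℝ X]
    [NormedAddCommGroup Y] [NormedSpace ℝ Y]
    {a b : ℝ} (hab : a < b) (F : ℝ → X →L[ℝ] Y) (G : ℝ → X →L[ℝ] X) :
    semivar a b (fun t => (F t).comp (G t)) ≤
      supNorm a b F * evar a b G + supNorm a b G * semivar a b F := by
  refine iSup_le fun n => iSup_le fun α => iSup_le fun hα => iSup_le fun x => iSup_le fun hx => ?_
  have hn : 0 < n := by
    rcases Nat.eq_zero_or_pos n with rfl | h
    · exact absurd (hα.1.symm.trans hα.2.1) hab.ne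
    · exact h
  have hmem : ∀ i ≤ n, α i ∈ Set.Icc a b := fun i hi => hα.mem_Icc hi
  -- decomposition
  have hdecomp : ∑ j ∈ Finset.range n,
        ((fun t => (F t).comp (G t)) (α (j + 1)) - (fun t => (F t).comp (G t)) (α j)) (x j)
      = (∑ j ∈ Finset.range n, F (α (j + 1)) ((G (α (j + 1)) - G (α j)) (x j)))
      + ∑ j ∈ Finset.range n, (F (α (j + 1)) - F (α j)) (G (α j) (x j)) := by
    rw [← Finset.sum_add_distrib]
    refine Finset.sum_congr rfl fun j _ => ?_
    simp only [ContinuousLinearMap.sub_apply, ContinuousLinearMap.coe_comp',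
      Function.comp_apply, map_sub]
    abel
  rw [hdecomp]
  set A := ∑ j ∈ Finset.range n, F (α (j + 1)) ((G (α (j + 1)) - G (α j)) (x j)) with hA
  set B := ∑ j ∈ Finset.range n, (F (α (j + 1)) - F (α j)) (G (α j) (x j)) with hB
  have step0 : ENNReal.ofReal ‖A + B‖ ≤ ENNReal.ofReal ‖A‖ + ENNReal.ofReal ‖B‖ :=
    le_trans (ENNReal.ofReal_le_ofReal (norm_add_le A B))
      (ENNReal.ofReal_add_le)
  refine step0.trans (add_le_add ?_ ?_)
  · -- first term
    have h1 : ‖A‖ ≤ ∑ j ∈ Finset.range n, ‖F (α (j + 1))‖ * ‖G (α (j + 1)) - G (α j)‖ := by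
      refine (norm_sum_le _ _).trans (Finset.sum_le_sum fun j _ => ?_)
      calc ‖F (α (j + 1)) ((G (α (j + 1)) - G (α j)) (x j))‖
          ≤ ‖F (α (j + 1))‖ * ‖(G (α (j + 1)) - G (α j)) (x j)‖ :=
            ContinuousLinearMap.le_opNorm _ _
        _ ≤ ‖F (α (j + 1))‖ * (‖G (α (j + 1)) - G (α j)‖ * ‖x j‖) :=
            mul_le_mul_of_nonneg_left (ContinuousLinearMap.le_opNorm _ _) (norm_nonneg _)
        _ ≤ ‖F (α (j + 1))‖ * (‖G (α (j + 1)) - G (α j)‖ * 1) := by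
            refine mul_le_mul_of_nonneg_left ?_ (norm_nonneg _)
            exact mul_le_mul_of_nonneg_left (hx j) (norm_nonneg _)
        _ = ‖F (α (j + 1))‖ * ‖G (α (j + 1)) - G (α j)‖ := by ring
    calc ENNReal.ofReal ‖A‖
        ≤ ENNReal.ofReal (∑ j ∈ Finset.range n, ‖F (α (j + 1))‖ * ‖G (α (j + 1)) - G (α j)‖) :=
          ENNReal.ofReal_le_ofReal h1
      _ = ∑ j ∈ Finset.range n,
            ENNReal.ofReal (‖F (α (j + 1))‖ * ‖G (α (j + 1)) - G (α j)‖) :=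
          ENNReal.ofReal_sum_of_nonneg fun j _ => by positivity
      _ = ∑ j ∈ Finset.range n,
            ENNReal.ofReal ‖F (α (j + 1))‖ * ENNReal.ofReal ‖G (α (j + 1)) - G (α j)‖ := by
          refine Finset.sum_congr rfl fun j _ => ENNReal.ofReal_mul (norm_nonneg _)
      _ ≤ ∑ j ∈ Finset.range n,
            supNorm a b F * ENNReal.ofReal ‖G (α (j + 1)) - G (α j)‖ := by
          refine Finset.sum_le_sum fun j hj => ?_
          exact mul_le_mul_left (ofReal_le_supNorm F (hmem _ (by
            simp only [Finset.mem_range] at hj; omega))) _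
      _ = supNorm a b F * ∑ j ∈ Finset.range n, ENNReal.ofReal ‖G (α (j + 1)) - G (α j)‖ :=
          (Finset.mul_sum _ _ _).symm
      _ = supNorm a b F *
            ENNReal.ofReal (∑ j ∈ Finset.range n, ‖G (α (j + 1)) - G (α j)‖) := by
          rw [ENNReal.ofReal_sum_of_nonneg fun j _ => norm_nonneg _]
      _ ≤ supNorm a b F * evar a b G := mul_le_mul_right (div_le_evar G hα) _
  · -- second term
    set y : ℕ → X := fun j => G (α j) (x j) with hy
    have hne : (Finset.range n).Nonempty := Finset.nonempty_range_iff.mpr hn.ne'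
    set c : ℝ := (Finset.range n).sup' hne fun j => ‖y j‖ with hc
    obtain ⟨j0, hj0, hj0c⟩ := Finset.exists_mem_eq_sup' hne fun j => ‖y j‖
    have hc0 : 0 ≤ c := by rw [hc, hj0c]; exact norm_nonneg _
    have hcle : ∀ j ∈ Finset.range n, ‖y j‖ ≤ c := fun j hj => by
      rw [hc]; exact Finset.le_sup' (fun j => ‖y j‖) hj
    rcases eq_or_lt_of_le hc0 with hceq | hcpos
    · -- c = 0 : all y j = 0
      have hB0 : B = 0 := by
        refine Finset.sum_eq_zero fun j hj => ?_
        have h1 : ‖y j‖ ≤ 0 := le_of_le_of_eq (hcle j hj) hceq.symm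
        have h0 : G (α j) (x j) = 0 := by
          have := norm_le_zero_iff.mp h1
          simpa [hy] using this
        rw [h0]
        simp
      simp [hB0]
    · -- c > 0 : rescale
      set z : ℕ → X := fun j => if j < n then c⁻¹ • y j else 0 with hz
      have hz1 : ∀ j, ‖z j‖ ≤ 1 := by
        intro j
        by_cases h : j < n
        · simp only [hz, if_pos h, norm_smul, norm_inv, Real.norm_eq_abs,
            abs_of_pos hcpos]
          rw [inv_mul_le_iff₀ hcpos, mul_one]
          exact hcle j (Finset.mem_range.mpr h)
        · simp [hz, if_neg h]
      have hBz : B = c • ∑ j ∈ Finset.range n, (F (α (j + 1)) - F (α j)) (z j) := by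
        rw [Finset.smul_sum, hB]
        refine Finset.sum_congr rfl fun j hj => ?_
        rw [hz]
        simp only [Finset.mem_range.mp hj, if_pos]
        rw [map_smul, smul_smul, mul_inv_cancel₀ hcpos.ne', one_smul]
      rw [hBz, norm_smul, Real.norm_eq_abs, abs_of_pos hcpos,
        ENNReal.ofReal_mul hc0]
      have hcG : ENNReal.ofReal c ≤ supNorm a b G := by
        have : c ≤ ‖G (α j0)‖ := by
          rw [hc, hj0c]
          calc ‖y j0‖ ≤ ‖G (α j0)‖ * ‖x j0‖ := ContinuousLinearMap.le_opNorm _ _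
            _ ≤ ‖G (α j0)‖ * 1 := mul_le_mul_of_nonneg_left (hx j0) (norm_nonneg _)
            _ = ‖G (α j0)‖ := mul_one _
        exact le_trans (ENNReal.ofReal_le_ofReal this)
          (ofReal_le_supNorm G (hmem _ (by
            simp only [Finset.mem_range] at hj0; omega)))
      exact mul_le_mul' hcG (div_le_semivar F hα hz1)

/-- if `F : [a,b] → L(X,Y)` has bounded semivariation and `G : [a,b] → L(X)` has
bounded variation, then `t ↦ F(t) ∘ G(t)` has bounded semivariation and
`SV(FG) ≤ ‖F‖_∞ var(G) + ‖G‖_∞ SV(F)`. -/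
theorem semivar_comp_bounded_variation
    {X Y : Type*} [NormedAddCommGroup X] [NormedSpace ℝ X] [CompleteSpace X]
    [NormedAddCommGroup Y] [NormedSpace ℝ Y] [CompleteSpace Y]
    (a b : ℝ) (hab : a < b) (F : ℝ → X →L[ℝ] Y) (G : ℝ → X →L[ℝ] X)
    (hF : semivar a b F < ⊤) (hG : evar a b G < ⊤) :
    semivar a b (fun t => (F t).comp (G t)) < ⊤ ∧
    semivar a b (fun t => (F t).comp (G t)) ≤
      supNorm a b F * evar a b G + supNorm a b G * semivar a b F := by
  have hineq := semivar_comp_le hab F G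
  have hSF : supNorm a b F < ⊤ :=
    lt_of_le_of_lt (supNorm_le_of_semivar hab F)
      (ENNReal.add_lt_top.mpr ⟨ENNReal.ofReal_lt_top, hF⟩)
  have hSG : supNorm a b G < ⊤ :=
    lt_of_le_of_lt (supNorm_le_of_evar hab G)
      (ENNReal.add_lt_top.mpr ⟨ENNReal.ofReal_lt_top, hG⟩)
  refine ⟨lt_of_le_of_lt hineq ?_, hineq⟩
  exact ENNReal.add_lt_top.mpr
    ⟨ENNReal.mul_lt_top hSF hG, ENNReal.mul_lt_top hSG hF⟩
end

section
/- Let F : [a,b] → L(X,Y). For y* ∈ Y*, define y*∘F : [a,b] → X* by (y*∘F)(t)(x) = y*(F(t)x). Then SV_a^b(F) = sup{ var_a^b(y*∘F) : y* ∈ Y*, ‖y*‖_{Y*} ≤ 1 }; in particular, F is of bounded semivariation on [a,b] if and only if y*∘F is of bounded variation on [a,b] for every y* ∈ Y*. -/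
open Filter Topology

set_option maxHeartbeats 1000000

section Aux

variable {X Y : Type*} [NormedAddCommGroup X] [NormedSpace ℝ X]
    [NormedAddCommGroup Y] [NormedSpace ℝ Y]

lemma le_semivar (a b : ℝ) (F : ℝ → X →L[ℝ] Y) {n : ℕ} {α : ℕ → ℝ}
    (hα : IsDivision a b n α) {x : ℕ → X} (hx : ∀ j, ‖x j‖ ≤ 1) :
    ENNReal.ofReal ‖∑ j ∈ Finset.range n, (F (α (j + 1)) - F (α j)) (x j)‖ ≤ semivar a b F :=
  le_iSup_of_le n (le_iSup_of_le α (le_iSup_of_le hα (le_iSup_of_le x (le_iSup_of_le hx le_rfl))))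

lemma le_evar {E : Type*} [NormedAddCommGroup E] (a b : ℝ) (G : ℝ → E) {n : ℕ} {α : ℕ → ℝ}
    (hα : IsDivision a b n α) :
    ENNReal.ofReal (∑ j ∈ Finset.range n, ‖G (α (j + 1)) - G (α j)‖) ≤ evar a b G :=
  le_iSup_of_le n (le_iSup_of_le α (le_iSup_of_le hα le_rfl))

lemma comp_sub_eq (F : ℝ → X →L[ℝ] Y) (g : Y →L[ℝ] ℝ) (s t : ℝ) :
    g.comp (F t) - g.comp (F s) = g.comp (F t - F s) := by
  ext y; simp

lemma term_bound (F : ℝ → X →L[ℝ] Y) (g : Y →L[ℝ] ℝ) (s t : ℝ) {x : X} (hx : ‖x‖ ≤ 1) :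
    ‖g ((F t - F s) x)‖ ≤ ‖g.comp (F t) - g.comp (F s)‖ := by
  rw [comp_sub_eq]
  calc ‖g ((F t - F s) x)‖ = ‖(g.comp (F t - F s)) x‖ := rfl
    _ ≤ ‖g.comp (F t - F s)‖ * ‖x‖ := (g.comp (F t - F s)).le_opNorm x
    _ ≤ ‖g.comp (F t - F s)‖ * 1 := by gcongr
    _ = ‖g.comp (F t - F s)‖ := mul_one _

/-- For a single division, the variation sum of `g ∘ F` is at most `‖g‖ * semivar`. -/
lemma sum_norm_comp_le (a b : ℝ) (F : ℝ → X →L[ℝ] Y) (g : Y →L[ℝ] ℝ) {n : ℕ} {α : ℕ → ℝ}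
    (hα : IsDivision a b n α) :
    ENNReal.ofReal (∑ j ∈ Finset.range n, ‖g.comp (F (α (j + 1))) - g.comp (F (α j))‖)
      ≤ ENNReal.ofReal ‖g‖ * semivar a b F := by
  refine ENNReal.le_of_forall_pos_le_add fun ε hε _ => ?_
  set ε' : ℝ := (ε : ℝ) / (n + 1) with hε'def
  have hεpos : (0:ℝ) < ε := by exact_mod_cast hε
  have hε'pos : 0 < ε' := by rw [hε'def]; positivity
  have hch : ∀ j : ℕ, ∃ x : X, ‖x‖ ≤ 1 ∧
      ‖g.comp (F (α (j + 1))) - g.comp (F (α j))‖ - ε' ≤ g ((F (α (j + 1)) - F (α j)) x) := by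
    intro j
    rw [comp_sub_eq]
    set A := g.comp (F (α (j + 1)) - F (α j)) with hA
    have hlt : ‖A‖ - ε' < ‖A‖ := by linarith
    obtain ⟨x, hx1, hx2⟩ := A.exists_lt_apply_of_lt_opNorm hlt
    have hAx : A x = g ((F (α (j + 1)) - F (α j)) x) := rfl
    rcases le_or_gt 0 (A x) with hpos | hneg
    · refine ⟨x, hx1.le, ?_⟩
      rw [← hAx]
      calc ‖A‖ - ε' ≤ ‖A x‖ := hx2.le
        _ = A x := by rw [Real.norm_eq_abs, abs_of_nonneg hpos]
    · refine ⟨-x, by rw [norm_neg]; exact hx1.le, ?_⟩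
      have hApp : g ((F (α (j + 1)) - F (α j)) (-x)) = -(A x) := by
        rw [map_neg, map_neg, hAx]
      rw [hApp]
      calc ‖A‖ - ε' ≤ ‖A x‖ := hx2.le
        _ = -(A x) := by rw [Real.norm_eq_abs, abs_of_neg hneg]
  choose x hx1 hx2 using hch
  set v : Y := ∑ j ∈ Finset.range n, (F (α (j + 1)) - F (α j)) (x j) with hv
  have key : (∑ j ∈ Finset.range n, ‖g.comp (F (α (j + 1))) - g.comp (F (α j))‖)
      ≤ ‖g‖ * ‖v‖ + n * ε' := by
    have h1 : (∑ j ∈ Finset.range n, ‖g.comp (F (α (j + 1))) - g.comp (F (α j))‖)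
        ≤ ∑ j ∈ Finset.range n, (g ((F (α (j + 1)) - F (α j)) (x j)) + ε') := by
      apply Finset.sum_le_sum
      intro j _
      have := hx2 j
      linarith
    have h2 : (∑ j ∈ Finset.range n, (g ((F (α (j + 1)) - F (α j)) (x j)) + ε'))
        = g v + n * ε' := by
      rw [Finset.sum_add_distrib, hv, map_sum]
      simp [mul_comm]
    rw [h2] at h1
    have h3 : g v ≤ ‖g‖ * ‖v‖ := by
      calc g v ≤ |g v| := le_abs_self _
        _ = ‖g v‖ := (Real.norm_eq_abs _).symm
        _ ≤ ‖g‖ * ‖v‖ := g.le_opNorm v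
    linarith
  calc ENNReal.ofReal (∑ j ∈ Finset.range n, ‖g.comp (F (α (j + 1))) - g.comp (F (α j))‖)
      ≤ ENNReal.ofReal (‖g‖ * ‖v‖ + n * ε') := ENNReal.ofReal_le_ofReal key
    _ ≤ ENNReal.ofReal (‖g‖ * ‖v‖) + ENNReal.ofReal (n * ε') := ENNReal.ofReal_add_le
    _ = ENNReal.ofReal ‖g‖ * ENNReal.ofReal ‖v‖ + ENNReal.ofReal (n * ε') := by
        rw [ENNReal.ofReal_mul (norm_nonneg g)]
    _ ≤ ENNReal.ofReal ‖g‖ * semivar a b F + ε := by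
        gcongr
        · exact le_semivar a b F hα hx1
        · calc ENNReal.ofReal (n * ε') ≤ ENNReal.ofReal (ε : ℝ) := by
                apply ENNReal.ofReal_le_ofReal
                rw [hε'def, mul_div_assoc']
                rw [div_le_iff₀ (by positivity)]
                nlinarith
            _ = (ε : ENNReal) := ENNReal.ofReal_coe_nnreal

/-- For a single division and unit vectors, the semivariation sum is at most the sup of
variations of `g ∘ F` over `‖g‖ ≤ 1`. -/
lemma single_le_sup_evar [CompleteSpace Y] (a b : ℝ) (F : ℝ → X →L[ℝ] Y) {n : ℕ} {α : ℕ → ℝ}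
    (hα : IsDivision a b n α) {x : ℕ → X} (hx : ∀ j, ‖x j‖ ≤ 1) :
    ENNReal.ofReal ‖∑ j ∈ Finset.range n, (F (α (j + 1)) - F (α j)) (x j)‖
      ≤ ⨆ (g : Y →L[ℝ] ℝ) (_ : ‖g‖ ≤ 1), evar a b fun t => g.comp (F t) := by
  set v : Y := ∑ j ∈ Finset.range n, (F (α (j + 1)) - F (α j)) (x j) with hv
  by_cases hv0 : v = 0
  · simp [hv0]
  obtain ⟨g, hg1, hg2⟩ := exists_dual_vector ℝ v (norm_ne_zero_iff.mpr hv0)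
  have hg2' : g v = ‖v‖ := by simpa using hg2
  have key : ‖v‖ ≤ ∑ j ∈ Finset.range n, ‖g.comp (F (α (j + 1))) - g.comp (F (α j))‖ := by
    rw [← hg2']
    calc g v = ∑ j ∈ Finset.range n, g ((F (α (j + 1)) - F (α j)) (x j)) := by
          rw [hv, map_sum]
      _ ≤ ∑ j ∈ Finset.range n, ‖g.comp (F (α (j + 1))) - g.comp (F (α j))‖ := by
          apply Finset.sum_le_sum
          intro j _
          exact le_trans (le_abs_self _) (term_bound F g (α j) (α (j + 1)) (hx j))
  have s1 : ENNReal.ofReal ‖v‖ ≤ evar a b fun t => g.comp (F t) :=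
    le_trans (ENNReal.ofReal_le_ofReal key) (le_evar a b (fun t => g.comp (F t)) hα)
  refine s1.trans ?_
  exact le_iSup_of_le g (le_iSup_of_le hg1.le le_rfl)

lemma evar_comp_le (a b : ℝ) (F : ℝ → X →L[ℝ] Y) (g : Y →L[ℝ] ℝ) :
    evar a b (fun t => g.comp (F t)) ≤ ENNReal.ofReal ‖g‖ * semivar a b F := by
  unfold evar
  refine iSup_le fun n => iSup_le fun α => iSup_le fun hα => ?_
  exact sum_norm_comp_le a b F g hα

lemma semivar_lt_top [CompleteSpace Y] (a b : ℝ) (F : ℝ → X →L[ℝ] Y)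
    (h : ∀ g : Y →L[ℝ] ℝ, evar a b (fun t => g.comp (F t)) < ⊤) :
    semivar a b F < ⊤ := by
  classical
  let ι : Type _ := Σ n : ℕ, {p : (ℕ → ℝ) × (ℕ → X) //
    IsDivision a b n p.1 ∧ ∀ j, ‖p.2 j‖ ≤ 1}
  let v : ι → Y := fun d =>
    ∑ j ∈ Finset.range d.1, (F (d.2.1.1 (j + 1)) - F (d.2.1.1 j)) (d.2.1.2 j)
  let T : ι → (Y →L[ℝ] ℝ) →L[ℝ] ℝ := fun d =>
    NormedSpace.inclusionInDoubleDual ℝ Y (v d)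
  have hpt : ∀ g : Y →L[ℝ] ℝ, ∃ C : ℝ, ∀ d : ι, ‖T d g‖ ≤ C := by
    intro g
    refine ⟨(evar a b (fun t => g.comp (F t))).toReal, fun d => ?_⟩
    obtain ⟨n, ⟨⟨α, x⟩, hα, hx⟩⟩ := d
    have h1 : T ⟨n, ⟨⟨α, x⟩, hα, hx⟩⟩ g
        = ∑ j ∈ Finset.range n, g ((F (α (j + 1)) - F (α j)) (x j)) := by
      show g (∑ j ∈ Finset.range n, (F (α (j + 1)) - F (α j)) (x j)) = _
      rw [map_sum]
    rw [h1]
    have h2 : ‖∑ j ∈ Finset.range n, g ((F (α (j + 1)) - F (α j)) (x j))‖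
        ≤ ∑ j ∈ Finset.range n, ‖g.comp (F (α (j + 1))) - g.comp (F (α j))‖ := by
      refine (norm_sum_le _ _).trans (Finset.sum_le_sum fun j _ => ?_)
      exact term_bound F g (α j) (α (j + 1)) (hx j)
    refine h2.trans ?_
    rw [← ENNReal.ofReal_le_iff_le_toReal (h g).ne]
    exact le_evar a b (fun t => g.comp (F t)) hα
  obtain ⟨C, hC⟩ := banach_steinhaus hpt
  have hnorm : ∀ d : ι, ‖v d‖ ≤ C := by
    intro d
    have heq : ‖T d‖ = ‖v d‖ :=
      (NormedSpace.inclusionInDoubleDualLi ℝ (E := Y)).norm_map (v d)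
    rw [← heq]
    exact hC d
  have hle : semivar a b F ≤ ENNReal.ofReal C := by
    unfold semivar
    refine iSup_le fun n => iSup_le fun α => iSup_le fun hα => iSup_le fun x =>
      iSup_le fun hx => ?_
    exact ENNReal.ofReal_le_ofReal (hnorm ⟨n, ⟨⟨α, x⟩, hα, hx⟩⟩)
  exact hle.trans_lt ENNReal.ofReal_lt_top

end Aux

/-- `SV_a^b(F) = sup{ var_a^b(y* ∘ F) : y* ∈ Y*, ‖y*‖ ≤ 1 }`; in particular `F`
has bounded semivariation iff `y* ∘ F` has bounded variation for every `y* ∈ Y*`. -/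
theorem semivar_eq_sup_dual_variation
    {X Y : Type*} [NormedAddCommGroup X] [NormedSpace ℝ X] [CompleteSpace X]
    [NormedAddCommGroup Y] [NormedSpace ℝ Y] [CompleteSpace Y]
    (a b : ℝ) (hab : a < b) (F : ℝ → X →L[ℝ] Y) :
    (semivar a b F =
      ⨆ (g : Y →L[ℝ] ℝ) (_ : ‖g‖ ≤ 1), evar a b fun t => g.comp (F t)) ∧
    (semivar a b F < ⊤ ↔ ∀ g : Y →L[ℝ] ℝ, evar a b (fun t => g.comp (F t)) < ⊤) := by
  constructor
  · apply le_antisymm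
    · unfold semivar
      refine iSup_le fun n => iSup_le fun α => iSup_le fun hα => iSup_le fun x =>
        iSup_le fun hx => ?_
      exact single_le_sup_evar a b F hα hx
    · refine iSup_le fun g => iSup_le fun hg => ?_
      have s1 : evar a b (fun t => g.comp (F t)) ≤ ENNReal.ofReal ‖g‖ * semivar a b F :=
        evar_comp_le a b F g
      refine s1.trans ?_
      have s2 : ENNReal.ofReal ‖g‖ * semivar a b F ≤ 1 * semivar a b F := by
        gcongr
        exact ENNReal.ofReal_le_one.mpr hg
      exact s2.trans_eq (one_mul _)
  · constructor
    · intro hfin g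
      exact (evar_comp_le a b F g).trans_lt (ENNReal.mul_lt_top ENNReal.ofReal_lt_top hfin)
    · exact semivar_lt_top a b F
end

section
/- Let F : [a,b] → L(X,Y) be of bounded semivariation on [a,b]. Then for each t ∈ (a,b] there exists an operator F(t−) ∈ L(X,Y**) such that for every y* ∈ Y*, the functions y*∘F(s) converge in the norm of X* as s → t− to the functional x ↦ (F(t−)x)(y*); similarly, for each s ∈ [a,b) there exists F(s+) ∈ L(X,Y**) such that for every y* ∈ Y*, y*∘F(u) converges in X* as u → s+ to the functional x ↦ (F(s+)x)(y*). -/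
open Filter Topology

section Helpers

lemma sum_range_two_mul {M : Type*} [AddCommMonoid M] (n : ℕ) (f : ℕ → M) :
    ∑ j ∈ Finset.range (2*n), f j = ∑ i ∈ Finset.range n, (f (2*i) + f (2*i+1)) := by
  induction n with
  | zero => simp
  | succ n ih =>
    have h : 2*(n+1) = 2*n + 1 + 1 := by ring
    rw [h, Finset.sum_range_succ, Finset.sum_range_succ, ih, Finset.sum_range_succ, add_assoc]

variable {X Y : Type*} [NormedAddCommGroup X] [NormedSpace ℝ X]
  [NormedAddCommGroup Y] [NormedSpace ℝ Y]

lemma my_opNorm_le_of_unit (f : X →L[ℝ] Y) {C : ℝ} (hC : 0 ≤ C)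
    (h : ∀ x : X, ‖x‖ ≤ 1 → ‖f x‖ ≤ C) : ‖f‖ ≤ C := by
  refine f.opNorm_le_bound hC fun x => ?_
  rcases eq_or_ne x 0 with rfl | hx
  · simp [mul_nonneg hC (norm_nonneg (0:X))]
  · have hx0 : (0:ℝ) < ‖x‖ := norm_pos_iff.mpr hx
    have := h (‖x‖⁻¹ • x) (by rw [norm_smul, norm_inv, norm_norm]; rw [inv_mul_cancel₀ hx0.ne']; )
    rw [map_smul, norm_smul, norm_inv, norm_norm] at this
    have h2 := mul_le_mul_of_nonneg_left this hx0.le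
    rwa [← mul_assoc, mul_inv_cancel₀ hx0.ne', one_mul, mul_comm] at h2

lemma semivar_div_bound (a b : ℝ) (F : ℝ → X →L[ℝ] Y) (hF : semivar a b F < ⊤)
    {n : ℕ} {α : ℕ → ℝ} (hα : IsDivision a b n α) {x : ℕ → X} (hx : ∀ j, ‖x j‖ ≤ 1) :
    ‖∑ j ∈ Finset.range n, (F (α (j + 1)) - F (α j)) (x j)‖ ≤ (semivar a b F).toReal := by
  have h1 : ENNReal.ofReal ‖∑ j ∈ Finset.range n, (F (α (j + 1)) - F (α j)) (x j)‖
      ≤ semivar a b F :=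
    le_iSup_of_le n (le_iSup_of_le α (le_iSup_of_le hα (le_iSup_of_le x (le_iSup_of_le hx le_rfl))))
  have := ENNReal.toReal_mono hF.ne h1
  rwa [ENNReal.toReal_ofReal (norm_nonneg _)] at this

end Helpers

section Pair
variable {X Y : Type*} [NormedAddCommGroup X] [NormedSpace ℝ X]
  [NormedAddCommGroup Y] [NormedSpace ℝ Y]

lemma semivar_pair_bound (a b : ℝ) (F : ℝ → X →L[ℝ] Y) (hF : semivar a b F < ⊤)
    (n : ℕ) (hn : 1 ≤ n) (δ : ℕ → ℝ) (hδ : ∀ i, i + 1 < 2*n → δ i < δ (i+1))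
    (h0 : a < δ 0) (hb : δ (2*n-1) < b) (x : ℕ → X) (hx : ∀ i, ‖x i‖ ≤ 1) :
    ‖∑ i ∈ Finset.range n, (F (δ (2*i+1)) - F (δ (2*i))) (x i)‖ ≤ (semivar a b F).toReal := by
  set α : ℕ → ℝ := fun j => if j = 0 then a else if j ≤ 2*n then δ (j-1) else b with hαdef
  set x' : ℕ → X := fun j => if j % 2 = 1 then x ((j-1)/2) else 0 with hx'def
  have hαval : ∀ j, 1 ≤ j → j ≤ 2*n → α j = δ (j-1) := by
    intro j h1 h2
    simp only [α]
    rw [if_neg (by omega), if_pos h2]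
  have hα : IsDivision a b (2*n+1) α := by
    refine ⟨by simp [α], ?_, ?_⟩
    · simp only [α]; rw [if_neg (by omega), if_neg (by omega)]
    · intro j hj
      rcases eq_or_ne j 0 with rfl | hj0
      · rw [show α 0 = a by simp [α], hαval 1 le_rfl (by omega)]
        simpa using h0
      · rcases eq_or_ne j (2*n) with rfl | hjn
        · rw [hαval (2*n) (by omega) le_rfl]
          rw [show α (2*n+1) = b by simp only [α]; rw [if_neg (by omega), if_neg (by omega)]]
          exact hb
        · rw [hαval j (by omega) (by omega), hαval (j+1) (by omega) (by omega)]
          have := hδ (j-1) (by omega)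
          rwa [show j - 1 + 1 = j by omega] at this
  have hx'le : ∀ j, ‖x' j‖ ≤ 1 := by
    intro j
    simp only [x']
    split_ifs
    · exact hx _
    · simp
  have hsum : ∑ j ∈ Finset.range (2*n+1), (F (α (j+1)) - F (α j)) (x' j)
      = ∑ i ∈ Finset.range n, (F (δ (2*i+1)) - F (δ (2*i))) (x i) := by
    rw [Finset.sum_range_succ]
    have hz : x' (2*n) = 0 := by simp only [x']; rw [if_neg (by omega)]
    rw [hz, map_zero, add_zero, sum_range_two_mul]
    refine Finset.sum_congr rfl fun i hi => ?_
    rw [Finset.mem_range] at hi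
    have hz2 : x' (2*i) = 0 := by simp only [x']; rw [if_neg (by omega)]
    have hodd : x' (2*i+1) = x i := by
      simp only [x']; rw [if_pos (by omega)]; congr 1; omega
    rw [hz2, map_zero, zero_add, hodd]
    rw [hαval (2*i+1) (by omega) (by omega), hαval (2*i+1+1) (by omega) (by omega)]
    congr 2 <;> omega
  calc ‖∑ i ∈ Finset.range n, (F (δ (2*i+1)) - F (δ (2*i))) (x i)‖
      = ‖∑ j ∈ Finset.range (2*n+1), (F (α (j+1)) - F (α j)) (x' j)‖ := by rw [hsum]
    _ ≤ (semivar a b F).toReal := semivar_div_bound a b F hF hα hx'le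

end Pair

section Refl
variable {X Y : Type*} [NormedAddCommGroup X] [NormedSpace ℝ X]
  [NormedAddCommGroup Y] [NormedSpace ℝ Y]

lemma norm_sub_le_semivar (a b : ℝ) (hab : a < b) (F : ℝ → X →L[ℝ] Y)
    (hF : semivar a b F < ⊤) {s : ℝ} (hs : s ∈ Set.Icc a b) :
    ‖F s - F a‖ ≤ (semivar a b F).toReal := by
  have hC0 : (0:ℝ) ≤ (semivar a b F).toReal := ENNReal.toReal_nonneg
  rcases eq_or_lt_of_le hs.1 with rfl | has
  · simpa using hC0
  refine my_opNorm_le_of_unit _ hC0 fun x hx => ?_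
  rcases eq_or_lt_of_le hs.2 with rfl | hsb
  · -- s = b, one-interval division
    have hα : IsDivision a s 1 (fun j => if j = 0 then a else s) := by
      refine ⟨by simp, by simp, ?_⟩
      intro i hi
      interval_cases i
      simpa using has
    have := semivar_div_bound a s F hF hα (x := fun _ => x) (fun _ => hx)
    simpa using this
  · -- a < s < b, two-interval division
    have hα : IsDivision a b 2 (fun j => if j = 0 then a else if j = 1 then s else b) := by
      refine ⟨by simp, by simp, ?_⟩
      intro i hi
      interval_cases i
      · simpa using has
      · simpa using hsb
    have := semivar_div_bound a b F hF hα (x := fun j => if j = 0 then x else 0)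
      (fun j => by by_cases h : j = 0 <;> simp [h, hx])
    simpa [Finset.sum_range_succ] using this

lemma semivar_reflect_le (a b : ℝ) (F : ℝ → X →L[ℝ] Y) :
    semivar a b (fun u => F (a + b - u)) ≤ semivar a b F := by
  refine iSup_le fun n => iSup_le fun α => iSup_le fun hα => iSup_le fun x => iSup_le fun hx => ?_
  set β : ℕ → ℝ := fun j => a + b - α (n - j) with hβdef
  obtain ⟨h0, hnn, hmono⟩ := hα
  have hβdiv : IsDivision a b n β := by
    refine ⟨by simp [β, hnn], by simp [β, h0], ?_⟩
    intro j hj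
    have h1 := hmono (n - (j+1)) (by omega)
    rw [show n - (j+1) + 1 = n - j by omega] at h1
    simp only [β]
    linarith
  set x' : ℕ → X := fun j => x (n - 1 - j) with hx'def
  have hx' : ∀ j, ‖x' j‖ ≤ 1 := fun j => hx _
  have hcong : ∀ j ∈ Finset.range n,
      (fun k => (F (β (k+1)) - F (β k)) (x' k)) (n - 1 - j)
        = -((F (a + b - α (j+1)) - F (a + b - α j)) (x j)) := by
    intro j hj
    rw [Finset.mem_range] at hj
    simp only [β, x']
    rw [show n - 1 - j + 1 = n - j by omega, show n - (n - j) = j by omega,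
      show n - (n - 1 - j) = j + 1 by omega, show n - 1 - (n - 1 - j) = j by omega]
    simp [ContinuousLinearMap.sub_apply]
  have hsumeq : ∑ k ∈ Finset.range n, (F (β (k+1)) - F (β k)) (x' k)
      = -∑ j ∈ Finset.range n, (F (a + b - α (j+1)) - F (a + b - α j)) (x j) := by
    rw [← Finset.sum_range_reflect (fun k => (F (β (k+1)) - F (β k)) (x' k)) n,
      Finset.sum_congr rfl hcong, Finset.sum_neg_distrib]
  calc ENNReal.ofReal ‖∑ j ∈ Finset.range n,
        ((fun u => F (a + b - u)) (α (j+1)) - (fun u => F (a + b - u)) (α j)) (x j)‖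
      = ENNReal.ofReal ‖∑ k ∈ Finset.range n, (F (β (k+1)) - F (β k)) (x' k)‖ := by
        rw [hsumeq, norm_neg]
    _ ≤ semivar a b F :=
        le_iSup_of_le n (le_iSup_of_le β (le_iSup_of_le hβdiv
          (le_iSup_of_le x' (le_iSup_of_le hx' le_rfl))))

end Refl

section Left
variable {X Y : Type*} [NormedAddCommGroup X] [NormedSpace ℝ X] [CompleteSpace X]
  [NormedAddCommGroup Y] [NormedSpace ℝ Y] [CompleteSpace Y]

lemma left_limit_exists (a b : ℝ) (hab : a < b) (F : ℝ → X →L[ℝ] Y)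
    (hF : semivar a b F < ⊤) (t : ℝ) (ht : t ∈ Set.Ioc a b) :
    ∃ Fm : X →L[ℝ] ((Y →L[ℝ] ℝ) →L[ℝ] ℝ),
      ∀ g : Y →L[ℝ] ℝ,
        Tendsto (fun s => g.comp (F s)) (𝓝[Set.Ico a t] t) (𝓝 (Fm.flip g)) := by
  obtain ⟨hat, htb⟩ := ht
  set C := (semivar a b F).toReal with hCdef
  have hC0 : (0:ℝ) ≤ C := ENNReal.toReal_nonneg
  set l : Filter ℝ := 𝓝[Set.Ico a t] t with hl
  have hlIio : l = 𝓝[Set.Iio t] t := nhdsWithin_Ico_eq_nhdsLT hat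
  haveI hne : l.NeBot := by rw [hlIio]; infer_instance
  have key : ∀ g : Y →L[ℝ] ℝ, ∃ h : X →L[ℝ] ℝ,
      Tendsto (fun s => g.comp (F s)) l (𝓝 h) := by
    intro g
    rw [← cauchy_map_iff_exists_tendsto, Metric.cauchy_iff]
    refine ⟨Filter.map_neBot, fun ε hε => ?_⟩
    have main : ∃ u ∈ Set.Ico a t, ∀ s ∈ Set.Ico u t, ∀ s' ∈ Set.Ico u t,
        dist (g.comp (F s)) (g.comp (F s')) < ε := by
      by_contra hcon
      push_neg at hcon
      have hbad : ∀ u, a ≤ u → u < t → ∃ p q : ℝ, u ≤ p ∧ p < q ∧ q < t ∧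
          ε ≤ ‖g.comp (F q) - g.comp (F p)‖ := by
        intro u hau hut
        obtain ⟨s, hs, s', hs', hd⟩ := hcon u ⟨hau, hut⟩
        rcases lt_trichotomy s s' with h | h | h
        · exact ⟨s, s', hs.1, h, hs'.2, by rwa [dist_eq_norm, norm_sub_rev] at hd⟩
        · subst h; simp [dist_self] at hd; linarith
        · exact ⟨s', s, hs'.1, h, hs.2, by rwa [dist_eq_norm] at hd⟩
      have hch : ∀ u : ℝ, ∃ pq : ℝ × ℝ, a < u → u < t →
          (u ≤ pq.1 ∧ pq.1 < pq.2 ∧ pq.2 < t ∧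
            ε ≤ ‖g.comp (F pq.2) - g.comp (F pq.1)‖) := by
        intro u
        by_cases h : a < u ∧ u < t
        · obtain ⟨p, q, h1, h2, h3, h4⟩ := hbad u h.1.le h.2
          exact ⟨(p, q), fun _ _ => ⟨h1, h2, h3, h4⟩⟩
        · exact ⟨(0,0), fun h1 h2 => absurd ⟨h1, h2⟩ h⟩
      choose P hP using hch
      set seq : ℕ → ℝ × ℝ :=
        fun k => Nat.rec (P ((a+t)/2)) (fun _ pq => P ((pq.2 + t)/2)) k with hseqdef
      have hseqS : ∀ k, seq (k+1) = P (((seq k).2 + t)/2) := fun k => rfl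
      have hinv : ∀ k, a < (seq k).1 ∧ (seq k).1 < (seq k).2 ∧ (seq k).2 < t ∧
          ε ≤ ‖g.comp (F (seq k).2) - g.comp (F (seq k).1)‖ := by
        intro k
        induction k with
        | zero =>
          have h1 : a < (a+t)/2 := by linarith
          have h2 : (a+t)/2 < t := by linarith
          obtain ⟨hp1, hp2, hp3, hp4⟩ := hP ((a+t)/2) h1 h2
          exact ⟨lt_of_lt_of_le h1 hp1, hp2, hp3, hp4⟩
        | succ k ih =>
          obtain ⟨ia, iab, ibt, -⟩ := ih
          have h1 : a < ((seq k).2 + t)/2 := by linarith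
          have h2 : ((seq k).2 + t)/2 < t := by linarith
          obtain ⟨hp1, hp2, hp3, hp4⟩ := hP _ h1 h2
          rw [hseqS k]
          exact ⟨lt_of_lt_of_le h1 hp1, hp2, hp3, hp4⟩
      have hchain : ∀ k, (seq k).2 < (seq (k+1)).1 := by
        intro k
        obtain ⟨ia, iab, ibt, -⟩ := hinv k
        have h1 : a < ((seq k).2 + t)/2 := by linarith
        have h2 : ((seq k).2 + t)/2 < t := by linarith
        have h3 := (hP _ h1 h2).1
        rw [hseqS k]
        calc (seq k).2 < ((seq k).2 + t)/2 := by linarith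
          _ ≤ (P (((seq k).2 + t)/2)).1 := h3
      have hxi : ∀ k : ℕ, ∃ x : X, ‖x‖ ≤ 1 ∧
          ε/2 < g ((F (seq k).2 - F (seq k).1) x) := by
        intro k
        obtain ⟨-, -, -, hε'⟩ := hinv k
        have hlt : ε/2 < ‖g.comp (F (seq k).2) - g.comp (F (seq k).1)‖ := by linarith
        obtain ⟨x, hx1, hx2⟩ :=
          ContinuousLinearMap.exists_lt_apply_of_lt_opNorm _ hlt
        have hev : (g.comp (F (seq k).2) - g.comp (F (seq k).1)) x
            = g ((F (seq k).2 - F (seq k).1) x) := by simp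
        rw [hev, Real.norm_eq_abs] at hx2
        rcases le_or_gt 0 (g ((F (seq k).2 - F (seq k).1) x)) with h | h
        · exact ⟨x, hx1.le, by rwa [abs_of_nonneg h] at hx2⟩
        · refine ⟨-x, by simpa using hx1.le, ?_⟩
          rw [map_neg, map_neg]
          rwa [abs_of_neg h] at hx2
      choose xs hxs1 hxs2 using hxi
      obtain ⟨n, hn⟩ := exists_nat_gt (‖g‖ * C / (ε/2))
      have hε2 : (0:ℝ) < ε/2 := by linarith
      have hn1 : 1 ≤ n := by
        rcases Nat.eq_zero_or_pos n with rfl | h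
        · exfalso
          have : (0:ℝ) ≤ ‖g‖ * C / (ε/2) := div_nonneg (mul_nonneg (norm_nonneg _) hC0) hε2.le
          norm_num at hn
          linarith
        · exact h
      set δ : ℕ → ℝ := fun i => if i % 2 = 0 then (seq (i/2)).1 else (seq (i/2)).2 with hδdef
      have hδeven : ∀ m, δ (2*m) = (seq m).1 := by
        intro m; simp only [δ]
        rw [if_pos (by omega), show 2*m/2 = m by omega]
      have hδodd : ∀ m, δ (2*m+1) = (seq m).2 := by
        intro m; simp only [δ]
        rw [if_neg (by omega), show (2*m+1)/2 = m by omega]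
      have hδmono : ∀ i, i + 1 < 2*n → δ i < δ (i+1) := by
        intro i hi
        rcases Nat.even_or_odd i with ⟨m, hm⟩ | ⟨m, hm⟩
        · have e1 : i = 2*m := by omega
          subst e1
          rw [hδeven m, show 2*m+1 = 2*m+1 from rfl, hδodd m]
          exact (hinv m).2.1
        · have e1 : i = 2*m+1 := by omega
          subst e1
          rw [hδodd m, show 2*m+1+1 = 2*(m+1) by ring, hδeven (m+1)]
          exact hchain m
      have hδ0 : a < δ 0 := by
        have := (hinv 0).1
        rw [show (0:ℕ) = 2*0 by rfl, hδeven 0]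
        exact this
      have hδlast : δ (2*n-1) < b := by
        have h1 : 2*n-1 = 2*(n-1)+1 := by omega
        rw [h1, hδodd (n-1)]
        exact lt_of_lt_of_le (hinv (n-1)).2.2.1 htb
      set xv : ℕ → X := fun i => if i < n then xs i else 0 with hxvdef
      have hxv : ∀ i, ‖xv i‖ ≤ 1 := by
        intro i
        by_cases h : i < n <;> simp [xv, h, hxs1 i]
      have hbound := semivar_pair_bound a b F hF n hn1 δ hδmono hδ0 hδlast xv hxv
      have hterm : ∀ i ∈ Finset.range n,
          ε/2 < g ((F (δ (2*i+1)) - F (δ (2*i))) (xv i)) := by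
        intro i hi
        rw [Finset.mem_range] at hi
        rw [hδodd i, hδeven i]
        simp only [xv]
        rw [if_pos hi]
        exact hxs2 i
      have hsumlt : (n : ℝ) * (ε/2) <
          g (∑ i ∈ Finset.range n, (F (δ (2*i+1)) - F (δ (2*i))) (xv i)) := by
        rw [map_sum]
        calc (n:ℝ) * (ε/2) = ∑ _i ∈ Finset.range n, (ε/2) := by
              rw [Finset.sum_const, Finset.card_range, nsmul_eq_mul]
          _ < _ := Finset.sum_lt_sum_of_nonempty
              (Finset.nonempty_range_iff.mpr (by omega)) hterm
      have hfin : g (∑ i ∈ Finset.range n, (F (δ (2*i+1)) - F (δ (2*i))) (xv i)) ≤ ‖g‖ * C := by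
        calc g (∑ i ∈ Finset.range n, (F (δ (2*i+1)) - F (δ (2*i))) (xv i))
            ≤ ‖g (∑ i ∈ Finset.range n, (F (δ (2*i+1)) - F (δ (2*i))) (xv i))‖ :=
              le_abs_self _
          _ ≤ ‖g‖ * ‖∑ i ∈ Finset.range n, (F (δ (2*i+1)) - F (δ (2*i))) (xv i)‖ :=
              g.le_opNorm _
          _ ≤ ‖g‖ * C := mul_le_mul_of_nonneg_left hbound (norm_nonneg g)
      rw [div_lt_iff₀ hε2] at hn
      linarith
    obtain ⟨u, hu, hosc⟩ := main
    refine ⟨(fun s => g.comp (F s)) '' Set.Ico u t, ?_, ?_⟩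
    · apply Filter.image_mem_map
      rw [hl]
      exact mem_nhdsWithin.mpr ⟨Set.Ioi u, isOpen_Ioi, hu.2,
        fun z hz => ⟨le_of_lt hz.1, hz.2.2⟩⟩
    · rintro x ⟨s, hs, rfl⟩ y ⟨s', hs', rfl⟩
      exact hosc s hs s' hs'
  choose L hL using key
  have hLadd : ∀ g₁ g₂, L (g₁ + g₂) = L g₁ + L g₂ := by
    intro g₁ g₂
    refine tendsto_nhds_unique (hL _) ?_
    have h1 := (hL g₁).add (hL g₂)
    simpa [ContinuousLinearMap.add_comp] using h1
  have hLsmul : ∀ (c : ℝ) (g : Y →L[ℝ] ℝ), L (c • g) = c • L g := by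
    intro c g
    refine tendsto_nhds_unique (hL _) ?_
    have h1 := (hL g).const_smul c
    simpa [ContinuousLinearMap.smul_comp] using h1
  have hFb : ∀ s ∈ Set.Icc a b, ‖F s‖ ≤ ‖F a‖ + C := by
    intro s hs
    have := norm_sub_le_semivar a b hab F hF hs
    have h2 := norm_sub_norm_le (F s) (F a)
    linarith [le_trans h2 this]
  have hLbound : ∀ g : Y →L[ℝ] ℝ, ‖L g‖ ≤ (‖F a‖ + C) * ‖g‖ := by
    intro g
    have hnorm := (hL g).norm
    refine le_of_tendsto hnorm ?_
    filter_upwards [self_mem_nhdsWithin] with s hs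
    calc ‖g.comp (F s)‖ ≤ ‖g‖ * ‖F s‖ := g.opNorm_comp_le (F s)
      _ ≤ ‖g‖ * (‖F a‖ + C) :=
          mul_le_mul_of_nonneg_left (hFb s ⟨hs.1, le_trans hs.2.le htb⟩) (norm_nonneg g)
      _ = (‖F a‖ + C) * ‖g‖ := mul_comm _ _
  let Lc : (Y →L[ℝ] ℝ) →L[ℝ] (X →L[ℝ] ℝ) :=
    LinearMap.mkContinuous
      { toFun := L, map_add' := hLadd, map_smul' := hLsmul } (‖F a‖ + C) hLbound
  refine ⟨Lc.flip, fun g => ?_⟩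
  rw [ContinuousLinearMap.flip_flip]
  exact hL g

end Left

/-- if `F : [a,b] → L(X,Y)` has bounded semivariation, then for each `t ∈ (a,b]`
there is an operator `F(t−) ∈ L(X,Y**)` such that, for every `y* ∈ Y*`, the functions
`y* ∘ F(s)` converge in the norm of `X*` as `s → t−` to the functional `x ↦ (F(t−)x)(y*)`;
similarly for right limits at each `s ∈ [a,b)`. -/
theorem weak_onesided_limits_in_bidual
    {X Y : Type*} [NormedAddCommGroup X] [NormedSpace ℝ X] [CompleteSpace X]
    [NormedAddCommGroup Y] [NormedSpace ℝ Y] [CompleteSpace Y]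
    (a b : ℝ) (hab : a < b) (F : ℝ → X →L[ℝ] Y) (hF : semivar a b F < ⊤) :
    (∀ t ∈ Set.Ioc a b, ∃ Fm : X →L[ℝ] ((Y →L[ℝ] ℝ) →L[ℝ] ℝ),
      ∀ g : Y →L[ℝ] ℝ,
        Filter.Tendsto (fun s => g.comp (F s)) (𝓝[Set.Ico a t] t) (𝓝 (Fm.flip g))) ∧
    (∀ t ∈ Set.Ico a b, ∃ Fp : X →L[ℝ] ((Y →L[ℝ] ℝ) →L[ℝ] ℝ),
      ∀ g : Y →L[ℝ] ℝ,
        Filter.Tendsto (fun s => g.comp (F s)) (𝓝[Set.Ioc t b] t) (𝓝 (Fp.flip g))) := by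
  constructor
  · exact fun t ht => left_limit_exists a b hab F hF t ht
  · intro t ht
    set F' : ℝ → X →L[ℝ] Y := fun u => F (a + b - u) with hF'def
    have hF' : semivar a b F' < ⊤ := lt_of_le_of_lt (semivar_reflect_le a b F) hF
    have ht' : a + b - t ∈ Set.Ioc a b := ⟨by linarith [ht.2], by linarith [ht.1]⟩
    obtain ⟨Fm, hFm⟩ := left_limit_exists a b hab F' hF' (a + b - t) ht'
    refine ⟨Fm, fun g => ?_⟩
    have hmap : Filter.Tendsto (fun u => a + b - u) (𝓝[Set.Ioc t b] t)
        (𝓝[Set.Ico a (a + b - t)] (a + b - t)) := by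
      apply ContinuousWithinAt.tendsto_nhdsWithin
      · exact (continuous_const.sub continuous_id).continuousWithinAt
      · intro u hu
        show a + b - u ∈ Set.Ico a (a + b - t)
        exact ⟨by linarith [hu.2], by linarith [hu.1]⟩
    have hcomp := (hFm g).comp hmap
    have heq : (fun u => g.comp (F u))
        = (fun v => g.comp (F' v)) ∘ (fun u => a + b - u) := by
      funext u
      show g.comp (F u) = g.comp (F (a + b - (a + b - u)))
      rw [show a + b - (a + b - u) = u by ring]
    rw [heq]
    exact hcomp
end
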